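/- Let G* be a CPDAG and X, Y two distinct vertices. X is an explicit cause of Y (there is a directed path from X to Y in G*, hence a common causal path in every DAG of the class) if and only if X and Y are d-connected given pa(X, G*) ∪ sib(X, G*) in the DAGs of the equivalence class [G*]. -/

import Mathlib

variable {V : Type*}

/-- A partially directed graph, with directed edges `dir` and undirected edges
`undir`; between two vertices there is at most one edge. -/
structure PDGraph (V : Type*) where
  dir : V → V → Prop
  undir : V → V → Prop
  undir_symm : ∀ {a b}, undir a b → undir b a
  dir_irrefl : ∀ a, ¬ dir a a
  undir_irrefl : ∀ a, ¬ undir a a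
  not_double : ∀ a b, dir a b → ¬ dir b a
  not_mixed : ∀ a b, dir a b → ¬ undir a b

namespace PDGraph

variable (G : PDGraph V)

/-- Two vertices are adjacent if joined by some edge. -/
def adj (a b : V) : Prop := G.dir a b ∨ G.dir b a ∨ G.undir a b

/-- Parents of `x`: vertices with a directed edge into `x`. -/
def pa (x : V) : Set V := {a | G.dir a x}

/-- Children of `x`: vertices with a directed edge from `x`. -/
def ch (x : V) : Set V := {b | G.dir x b}

/-- Siblings (undirected neighbours) of `x`. -/
def sib (x : V) : Set V := {a | G.undir a x}

end PDGraph

/-- A directed-edge relation is a DAG if it has no directed cycle. -/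
def IsDAG (E : V → V → Prop) : Prop := ∀ a, ¬ Relation.TransGen E a a

/-- A v-structure `a → b ← c` in a directed graph, with `a` and `c` non-adjacent. -/
def VStruct (E : V → V → Prop) (a b c : V) : Prop :=
  E a b ∧ E c b ∧ a ≠ c ∧ ¬ E a c ∧ ¬ E c a

/-- The DAG `E` belongs to the Markov equivalence class represented by the
partially directed graph `G`: it is obtained by orienting the undirected edges
of `G` acyclically without creating any new v-structure. -/
def InClass (G : PDGraph V) (E : V → V → Prop) : Prop :=
  IsDAG E ∧
  (∀ a b, G.dir a b → E a b) ∧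
  (∀ a b, G.undir a b → E a b ∨ E b a) ∧
  (∀ a b, E a b → G.adj a b) ∧
  (∀ a b c, VStruct E a b c → G.dir a b ∧ G.dir c b)

/-- `G` is a CPDAG: its class is nonempty, and every undirected edge of `G` is
oriented in both ways among the DAGs of the class (so an edge of `G` is
directed iff it is directed the same way in every DAG of the class). -/
def IsCPDAG (G : PDGraph V) : Prop :=
  (∃ E, InClass G E) ∧ ∀ a b, G.undir a b → ∃ E, InClass G E ∧ E a b

/-- A single step of a partially directed path away from the start. -/
def PDStep (G : PDGraph V) (a b : V) : Prop := G.dir a b ∨ G.undir a b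

/-- `p` is a partially directed path from `x` to `y` in `G`: distinct vertices,
no edge on it points back toward `x`. -/
def IsPDPath (G : PDGraph V) (x y : V) (p : List V) : Prop :=
  p.Nodup ∧ p.Chain' (PDStep G) ∧ p.head? = some x ∧ p.getLast? = some y

/-- A path is chordless in `G` if no two nonconsecutive vertices on it are adjacent. -/
def ChordlessIn (G : PDGraph V) (p : List V) : Prop :=
  ∀ (i j : ℕ) (hi : i < p.length) (hj : j < p.length),
    i + 1 < j → ¬ G.adj (p.get ⟨i, hi⟩) (p.get ⟨j, hj⟩)

/-- The critical set of `x` with respect to `y`: the vertices adjacent to `x`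
lying on (i.e. directly following `x` on) some chordless partially directed
path from `x` to `y`. -/
def criticalSet (G : PDGraph V) (x y : V) : Set V :=
  {c | ∃ p, IsPDPath G x y p ∧ ChordlessIn G p ∧ p[1]? = some c}

/-- One step along a path in the skeleton of the directed graph `E`. -/
def SkelStep (E : V → V → Prop) (a b : V) : Prop := E a b ∨ E b a

/-- The middle vertex `b` of a consecutive triple on a path is active given `Z`:
if it is a collider then it has a descendant in `Z`, otherwise it is not in `Z`. -/
def ActiveTriple (E : V → V → Prop) (Z : Set V) (a b c : V) : Prop :=
  (E a b ∧ E c b → ∃ d ∈ Z, Relation.ReflTransGen E b d) ∧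
  (¬ (E a b ∧ E c b) → b ∉ Z)

/-- `x` and `y` are d-connected given `Z` in the DAG `E`: neither endpoint is in
`Z` and there is a path between them on which every intermediate vertex is active. -/
def DConn (E : V → V → Prop) (Z : Set V) (x y : V) : Prop :=
  x ∉ Z ∧ y ∉ Z ∧ ∃ p : List V, p.Nodup ∧ p.Chain' (SkelStep E) ∧
    p.head? = some x ∧ p.getLast? = some y ∧
    ∀ (i : ℕ) (h : i + 2 < p.length),
      ActiveTriple E Z (p.get ⟨i, by omega⟩) (p.get ⟨i + 1, by omega⟩) (p.get ⟨i + 2, h⟩)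

/-- d-separation: `x ⟂ y | Z` in the DAG `E`. -/
def DSep (E : V → V → Prop) (Z : Set V) (x y : V) : Prop := ¬ DConn E Z x y

/-- `x` is an explicit cause of `y`: `G` itself has a directed path from `x` to `y`. -/
def ExplicitCause (G : PDGraph V) (x y : V) : Prop := Relation.TransGen G.dir x y

/-- `x` is a definite cause of `y`: every DAG in the class has a directed path
from `x` to `y`. -/
def DefiniteCause (G : PDGraph V) (x y : V) : Prop :=
  ∀ E, InClass G E → Relation.TransGen E x y

/-- `x` is a definite non-cause of `y`: no DAG in the class has a directed path
from `x` to `y`. -/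
def DefiniteNonCause (G : PDGraph V) (x y : V) : Prop :=
  ∀ E, InClass G E → ¬ Relation.TransGen E x y

/-- `x` is a possible cause of `y`: it is an ancestor of `y` in some but not
all DAGs of the class. -/
def PossibleCause (G : PDGraph V) (x y : V) : Prop :=
  (∃ E, InClass G E ∧ Relation.TransGen E x y) ∧
  (∃ E, InClass G E ∧ ¬ Relation.TransGen E x y)

/-- `x` is an implicit cause of `y`: a definite cause that is not explicit. -/
def ImplicitCause (G : PDGraph V) (x y : V) : Prop :=
  DefiniteCause G x y ∧ ¬ ExplicitCause G x y

/-- `x` and `y` lie in the same chain component of `G`: they are connected by a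
purely undirected path. -/
def SameChainComp (G : PDGraph V) (x y : V) : Prop := Relation.ReflTransGen G.undir x y

/-- A set of vertices pairwise joined by undirected edges. -/
def UClique (G : PDGraph V) (S : Set V) : Prop :=
  ∀ a ∈ S, ∀ b ∈ S, a ≠ b → G.undir a b

/-- `M` is a maximal clique of the induced subgraph of `G` over the siblings of `x`. -/
def MaxCliqueInSib (G : PDGraph V) (x : V) (M : Set V) : Prop :=
  M ⊆ G.sib x ∧ UClique G M ∧
    ∀ M', M' ⊆ G.sib x → UClique G M' → M ⊆ M' → M' = M

/-- `S` induces a complete subgraph of `G`: all its vertices pairwise adjacent. -/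
def CompleteIn (G : PDGraph V) (S : Set V) : Prop :=
  ∀ a ∈ S, ∀ b ∈ S, a ≠ b → G.adj a b

/-!
A directed path of `G` stays directed in every DAG of the class; it has no colliders, and its
vertices are descendants of `x` in `G`, hence outside `pa x ∪ sib x` (a sibling that is a
descendant would close a cycle in a DAG orienting it into `x`).

Conversely, walk along a d-connecting path from `x` in one DAG `E` of the class. Following an
`E`-edge out of a descendant of `x` in `G` reaches a descendant again, or a sibling `s` with
`x → s` in `E` (Meek's rule 1). The path can turn against the edges only at a collider, whose
descendant in the conditioning set must be such a sibling `s`. After that, a vertex `z → w` with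
`w` an `E`-ancestor of `s` is again a descendant of `x` or lies in `pa x ∪ sib x`, where the path
would be blocked: otherwise rule 1 orients a shortcut-free `E`-path `z → w → ⋯ → s` forward in
every DAG of the class, closing a cycle in one where `s → x`.
-/

open Relation

section ShortcutFree

variable {α : Type*} {R : α → α → Prop}

/-- `ShortcutFreePath R t a b`: an `R`-path `a → b → ⋯ → t` containing no `u → v → w`
with `R u w`. -/
inductive ShortcutFreePath (R : α → α → Prop) (t : α) : α → α → Prop
  | last {a : α} : R a t → ShortcutFreePath R t a t
  | cons {a b c : α} : R a b → ¬ R a c → ShortcutFreePath R t b c → ShortcutFreePath R t a b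

theorem ShortcutFreePath.rel {t a b : α} (h : ShortcutFreePath R t a b) : R a b := by
  cases h with
  | last h => exact h
  | cons h _ _ => exact h

theorem ShortcutFreePath.reattach {t b c : α} (h : ShortcutFreePath R t b c) :
    ∀ {a}, R a c → ∃ d, ShortcutFreePath R t a d := by
  induction h with
  | last _ => exact fun hat => ⟨_, .last hat⟩
  | @cons b c d _ _ hcd ih =>
    intro a hac
    by_cases had : R a d
    · exact ih had
    · exact ⟨c, .cons hac had hcd⟩

theorem exists_shortcutFreePath {a t : α} (h : TransGen R a t) :
    ∃ b, ShortcutFreePath R t a b := by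
  induction h using TransGen.head_induction_on with
  | single h => exact ⟨_, .last h⟩
  | @head a u hau _ ih =>
    obtain ⟨c, hc⟩ := ih
    by_cases hac : R a c
    · exact hc.reattach hac
    · exact ⟨u, .cons hau hac hc⟩

end ShortcutFree

theorem PDGraph.adj_symm (G : PDGraph V) {a b : V} : G.adj a b → G.adj b a
  | .inl h => .inr (.inl h)
  | .inr (.inl h) => .inl h
  | .inr (.inr h) => .inr (.inr (G.undir_symm h))

namespace InClass

variable {G : PDGraph V} {E E₂ : V → V → Prop}

theorem acyclic (hE : InClass G E) {a b : V} (hab : E a b) (hba : ReflTransGen E b a) : False :=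
  hE.1 a (TransGen.head' hab hba)

theorem dir (hE : InClass G E) {a b : V} (h : G.dir a b) : E a b := hE.2.1 a b h

theorem orient (hE : InClass G E) {a b : V} (h : G.undir a b) : E a b ∨ E b a := hE.2.2.1 a b h

theorem adj (hE : InClass G E) {a b : V} (h : E a b) : G.adj a b := hE.2.2.2.1 a b h

theorem rel_or_rel_of_adj (hE : InClass G E) {a b : V} : G.adj a b → E a b ∨ E b a
  | .inl h => .inl (hE.dir h)
  | .inr (.inl h) => .inr (hE.dir h)
  | .inr (.inr h) => hE.orient h

theorem reflTransGen_of_dir (hE : InClass G E) {a b : V} (h : ReflTransGen G.dir a b) :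
    ReflTransGen E a b :=
  ReflTransGen.mono (fun _ _ => hE.dir) _ _ h

theorem adj_of_parents (hE : InClass G E) {a b c : V} (hab : E a b) (hcb : E c b) (hac : a ≠ c)
    (hcb' : ¬ G.dir c b) : G.adj a c := by
  by_contra hadj
  exact hcb' (hE.2.2.2.2 a b c
    ⟨hab, hcb, hac, fun h => hadj (hE.adj h), fun h => hadj (G.adj_symm (hE.adj h))⟩).2

theorem rel_of_not_adj (hE₂ : InClass G E₂) (hE : InClass G E) {a b c : V} (hab : E₂ a b)
    (hbc : E b c) (hac : ¬ G.adj a c) (hne : a ≠ c) : E₂ b c := by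
  rcases hE.adj hbc with h | h | h
  · exact hE₂.dir h
  · exact (hE.acyclic hbc (.single (hE.dir h))).elim
  · exact (hE₂.orient h).resolve_right fun hcb =>
      hac (hE₂.adj_of_parents hab hcb hne fun h' => G.not_mixed _ _ h' (G.undir_symm h))

theorem reflTransGen_of_shortcutFreePath (hE : InClass G E) (hE₂ : InClass G E₂) {t a b : V}
    (hp : ShortcutFreePath E t a b) (hab : E₂ a b) : ReflTransGen E₂ b t := by
  induction hp with
  | last _ => exact .refl
  | @cons a b c hab' hac hbc ih =>
    have hbc' : E b c := hbc.rel
    have hnadj : ¬ G.adj a c := fun h => (hE.rel_or_rel_of_adj h).elim hac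
      fun hca => hE.acyclic hab' (.head hbc' (.single hca))
    have hbc₂ : E₂ b c := hE₂.rel_of_not_adj hE hab hbc' hnadj
      (by rintro rfl; exact hE.acyclic hab' (.single hbc'))
    exact .head hbc₂ (ih hbc₂)

end InClass

namespace IsCPDAG

variable {G : PDGraph V} {E : V → V → Prop}

theorem acyclic (hG : IsCPDAG G) {a : V} : ¬ TransGen G.dir a a := fun h => by
  obtain ⟨E, hE⟩ := hG.1
  exact hE.1 a (TransGen.mono (fun _ _ => hE.dir) _ _ h)

theorem adj_of_dir_undir (hG : IsCPDAG G) {a b c : V} (hab : G.dir a b) (hbc : G.undir b c) :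
    G.adj a c := by
  obtain ⟨E, hE, hcb⟩ := hG.2 c b (G.undir_symm hbc)
  refine hE.adj_of_parents (hE.dir hab) hcb ?_ fun h => G.not_mixed _ _ h (G.undir_symm hbc)
  rintro rfl
  exact G.not_mixed _ _ hab (G.undir_symm hbc)

theorem not_mem_paSib (hG : IsCPDAG G) {x u : V} (h : ReflTransGen G.dir x u) :
    u ∉ G.pa x ∪ G.sib x := by
  rintro (hux | hux)
  · obtain ⟨E, hE⟩ := hG.1
    exact hE.acyclic (hE.dir hux) (hE.reflTransGen_of_dir h)
  · obtain ⟨E, hE, hux⟩ := hG.2 u x hux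
    exact hE.acyclic hux (hE.reflTransGen_of_dir h)

theorem desc_or_sib_of_undir (hG : IsCPDAG G) {x u q : V} (hxu : ReflTransGen G.dir x u)
    (huq : G.undir u q) : ReflTransGen G.dir x q ∨ G.undir q x := by
  induction hxu generalizing q with
  | refl => exact .inr (G.undir_symm huq)
  | tail hxa hab ih =>
    rcases hG.adj_of_dir_undir hab huq with h | h | h
    · exact .inl (hxa.tail h)
    · obtain ⟨E, hE, hbq⟩ := hG.2 _ _ huq
      exact (hE.acyclic (hE.dir hab) (.head hbq (.single (hE.dir h)))).elim
    · exact ih h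

theorem desc_or_sib_of_rel (hG : IsCPDAG G) (hE : InClass G E) {x u v : V}
    (hxu : ReflTransGen G.dir x u) (huv : E u v) :
    ReflTransGen G.dir x v ∨ (G.undir v x ∧ E x v) := by
  rcases hE.adj huv with h | h | h
  · exact .inl (hxu.tail h)
  · exact (hE.acyclic huv (.single (hE.dir h))).elim
  · refine (hG.desc_or_sib_of_undir hxu h).imp_right fun hvx => ⟨hvx, ?_⟩
    exact (hE.orient hvx).resolve_left fun hvx' =>
      hE.acyclic hvx' ((hE.reflTransGen_of_dir hxu).tail huv)

theorem desc_or_mem_of_rel_sib (hG : IsCPDAG G) (hE : InClass G E) {x s c : V}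
    (hs : G.undir s x) (hxs : E x s) (hcs : E c s) :
    ReflTransGen G.dir x c ∨ c ∈ G.pa x ∪ G.sib x := by
  by_cases hcx : c = x
  · exact .inl (hcx ▸ .refl)
  have hadj : G.adj c x := by
    rcases hE.adj hcs with h | h | h
    · exact hG.adj_of_dir_undir h hs
    · exact (hE.acyclic hcs (.single (hE.dir h))).elim
    · exact G.adj_symm (hE.adj_of_parents hxs hcs (Ne.symm hcx) fun h' => G.not_mixed _ _ h' h)
  rcases hadj with h | h | h
  · exact .inr (.inl h)
  · exact .inl (.single h)
  · exact .inr (.inr h)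

theorem desc_or_mem_or_rel_next (hG : IsCPDAG G) (hE : InClass G E) {x s w w' z : V}
    (hs : G.undir s x) (hp : ShortcutFreePath E s w w') (hzw : E z w)
    (hxw : ReflTransGen G.dir x w) :
    ReflTransGen G.dir x z ∨ z ∈ G.pa x ∪ G.sib x ∨
      (E z w' ∧ ReflTransGen G.dir x w') := by
  have hww' : E w w' := hp.rel
  rcases hE.adj hzw with hzw_dir | hwz | hzw_undir
  · by_cases hzw' : G.adj z w'
    · have hzw'' : E z w' := (hE.rel_or_rel_of_adj hzw').resolve_right fun h =>
        hE.acyclic hzw (.head hww' (.single h))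
      rcases hG.desc_or_sib_of_rel hE hxw hww' with hxw' | ⟨hw'x, hxw'⟩
      · exact .inr (.inr ⟨hzw'', hxw'⟩)
      · exact (hG.desc_or_mem_of_rel_sib hE hw'x hxw' hzw'').imp_right .inl
    · -- Meek's rule 1 orients `z → w → w' → ⋯ → s` forward in every DAG of the class,
      -- which closes a directed cycle in one where `s → x`.
      exfalso
      obtain ⟨E₂, hE₂, hsx⟩ := hG.2 s x hs
      have hww₂ : E₂ w w' := hE₂.rel_of_not_adj hE (hE₂.dir hzw_dir) hww' hzw'
        (by rintro rfl; exact hE.acyclic hzw (.single hww'))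
      exact hE₂.acyclic hsx (((hE₂.reflTransGen_of_dir hxw).tail hww₂).trans
        (hE.reflTransGen_of_shortcutFreePath hE₂ hp hww₂))
  · exact (hE.acyclic hzw (.single (hE.dir hwz))).elim
  · exact (hG.desc_or_sib_of_undir hxw (G.undir_symm hzw_undir)).imp_right (.inl ∘ .inr)

theorem desc_or_mem_of_shortcutFreePath (hG : IsCPDAG G) (hE : InClass G E) {x s w w' : V}
    (hs : G.undir s x) (hp : ShortcutFreePath E s w w') :
    ∀ {z}, E z w → ReflTransGen G.dir x w →
      ReflTransGen G.dir x z ∨ z ∈ G.pa x ∪ G.sib x := by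
  induction hp with
  | last hws =>
    intro z hzw hxw
    rcases hG.desc_or_mem_or_rel_next hE hs (.last hws) hzw hxw with h | h | ⟨-, hxs⟩
    exacts [.inl h, .inr h, (hG.not_mem_paSib hxs (.inr hs)).elim]
  | cons hab hac hbc ih =>
    intro z hzw hxw
    rcases hG.desc_or_mem_or_rel_next hE hs (.cons hab hac hbc) hzw hxw with h | h | ⟨hzb, hxb⟩
    exacts [.inl h, .inr h, ih hzb hxb]

theorem desc_or_mem_of_rel_of_reflTransGen_sib (hG : IsCPDAG G) (hE : InClass G E)
    {x s w z : V} (hs : G.undir s x) (hxw : ReflTransGen G.dir x w) (hws : ReflTransGen E w s)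
    (hzw : E z w) : ReflTransGen G.dir x z ∨ z ∈ G.pa x ∪ G.sib x := by
  have hsw : s ≠ w := by
    rintro rfl
    exact hG.not_mem_paSib hxw (.inr hs)
  obtain ⟨w', hp⟩ :=
    exists_shortcutFreePath ((reflTransGen_iff_eq_or_transGen.1 hws).resolve_left hsw)
  exact hG.desc_or_mem_of_shortcutFreePath hE hs hp hzw hxw

end IsCPDAG

/-- The invariant maintained along a d-connecting path from `x` given `pa x ∪ sib x`, for its
edge `t – u`. When the path turns against the edge direction, `s` is the sibling of `x` below the
last collider passed, which is what keeps the new vertex a descendant of `x`. -/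
def DescendantEdge (G : PDGraph V) (E : V → V → Prop) (x t u : V) : Prop :=
  (E t u ∧ (ReflTransGen G.dir x u ∨ (G.undir u x ∧ E x u))) ∨
  (E u t ∧ ReflTransGen G.dir x u ∧ ∃ s, G.undir s x ∧ ReflTransGen E u s)

theorem DescendantEdge.reflTransGen {G : PDGraph V} {E : V → V → Prop} {x t y : V}
    (h : DescendantEdge G E x t y) (hy : y ∉ G.pa x ∪ G.sib x) : ReflTransGen G.dir x y := by
  rcases h with ⟨_, h | ⟨hyx, _⟩⟩ | ⟨_, h, _⟩
  · exact h
  · exact absurd (.inr hyx) hy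
  · exact h

namespace IsCPDAG

variable {G : PDGraph V} {E : V → V → Prop}

theorem descendantEdge_start (hG : IsCPDAG G) (hE : InClass G E) {x v : V}
    (hxv : SkelStep E x v) (hv : E v x → v ∉ G.pa x ∪ G.sib x) :
    DescendantEdge G E x x v := by
  rcases hxv with hxv | hvx
  · exact .inl ⟨hxv, hG.desc_or_sib_of_rel hE .refl hxv⟩
  · exfalso
    rcases hE.adj hvx with h | h | h
    · exact hv hvx (.inl h)
    · exact hE.acyclic hvx (.single (hE.dir h))
    · exact hv hvx (.inr h)

theorem descendantEdge_next (hG : IsCPDAG G) (hE : InClass G E) {x t u v : V}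
    (hinv : DescendantEdge G E x t u) (hact : ActiveTriple E (G.pa x ∪ G.sib x) t u v)
    (huv : SkelStep E u v) (hv : E v u → v ∉ G.pa x ∪ G.sib x) :
    DescendantEdge G E x u v := by
  rcases huv with huv | hvu
  · have hxu : ReflTransGen G.dir x u := by
      rcases hinv with ⟨_, hxu | ⟨hux, _⟩⟩ | ⟨_, hxu, _⟩
      · exact hxu
      · exact absurd (.inr hux) (hact.2 fun hcol => hE.acyclic huv (.single hcol.2))
      · exact hxu
    exact .inl ⟨huv, hG.desc_or_sib_of_rel hE hxu huv⟩
  · have hvZ := hv hvu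
    refine .inr ⟨hvu, ?_⟩
    rcases hinv with ⟨htu, hxu | ⟨hux, hxu⟩⟩ | ⟨_, hxu, s, hs, hus⟩
    · obtain ⟨d, hdZ, hud⟩ := hact.1 ⟨htu, hvu⟩
      have hdx : G.undir d x := hdZ.resolve_left fun hdx =>
        hE.acyclic (hE.dir hdx) ((hE.reflTransGen_of_dir hxu).trans hud)
      exact ⟨(hG.desc_or_mem_of_rel_of_reflTransGen_sib hE hdx hxu hud hvu).resolve_right hvZ,
        d, hdx, .head hvu hud⟩
    · exact ⟨(hG.desc_or_mem_of_rel_sib hE hux hxu hvu).resolve_right hvZ, u, hux, .single hvu⟩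
    · exact ⟨(hG.desc_or_mem_of_rel_of_reflTransGen_sib hE hs hxu hus hvu).resolve_right hvZ,
        s, hs, .head hvu hus⟩

theorem explicitCause_of_dConn (hG : IsCPDAG G) (hE : InClass G E) {x y : V} (hxy : x ≠ y)
    (h : DConn E (G.pa x ∪ G.sib x) x y) : ExplicitCause G x y := by
  obtain ⟨-, hyZ, p, -, hch, hhd, hlast, hact⟩ := h
  simp only [List.get_eq_getElem] at hact
  rw [List.head?_eq_getElem?, List.getElem?_eq_some_iff] at hhd
  rw [List.getLast?_eq_getElem?, List.getElem?_eq_some_iff] at hlast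
  obtain ⟨_, hx⟩ := hhd
  obtain ⟨_, hy⟩ := hlast
  have hlen : 2 ≤ p.length := by
    by_contra hlen
    simp only [show p.length - 1 = 0 by omega] at hy
    exact hxy (hx.symm.trans hy)
  have hstep : ∀ i (hi : i + 1 < p.length), SkelStep E p[i] p[i + 1] :=
    List.isChain_iff_getElem.1 hch
  have hunblocked : ∀ i (hi : i + 1 < p.length),
      E p[i + 1] p[i] → p[i + 1] ∉ G.pa x ∪ G.sib x := by
    intro i hi hback
    by_cases hi2 : i + 2 < p.length
    · exact (hact i hi2).2 fun hcol => hE.acyclic hcol.1 (.single hback)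
    · simpa only [show i + 1 = p.length - 1 by omega, hy] using hyZ
  have hinv : ∀ i (hi : i + 1 < p.length), DescendantEdge G E x p[i] p[i + 1] := by
    intro i hi
    induction i with
    | zero =>
      have hxv := hstep 0 hi
      have hv := hunblocked 0 hi
      rw [hx] at hxv hv ⊢
      exact hG.descendantEdge_start hE hxv hv
    | succ i ih =>
      exact hG.descendantEdge_next hE (ih (by omega)) (hact i hi) (hstep _ hi) (hunblocked _ hi)
  have hxy' : ReflTransGen G.dir x y := by
    have := (hinv (p.length - 2) (by omega)).reflTransGen
    simp only [show p.length - 2 + 1 = p.length - 1 by omega, hy] at this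
    exact this hyZ
  exact (reflTransGen_iff_eq_or_transGen.1 hxy').resolve_left hxy.symm

theorem dConn_of_explicitCause (hG : IsCPDAG G) (hE : InClass G E) {x y : V}
    (h : ExplicitCause G x y) : DConn E (G.pa x ∪ G.sib x) x y := by
  obtain ⟨l, hch, hlast⟩ := List.exists_isChain_cons_of_relationReflTransGen h.to_reflTransGen
  have hpw : (x :: l).Pairwise (TransGen G.dir) :=
    List.isChain_iff_pairwise.1 (hch.imp fun _ _ => .single)
  refine ⟨hG.not_mem_paSib .refl, hG.not_mem_paSib h.to_reflTransGen, x :: l,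
    List.nodup_iff_pairwise_ne.2 (hpw.imp fun hab => by rintro rfl; exact hG.acyclic hab),
    hch.imp fun _ _ h => .inl (hE.dir h), rfl,
    by rw [List.getLast?_eq_some_getLast (List.cons_ne_nil _ _), hlast], fun i hi => ?_⟩
  simp only [List.get_eq_getElem]
  have hdir : G.dir (x :: l)[i + 1] (x :: l)[i + 2] := List.isChain_iff_getElem.1 hch (i + 1) hi
  have hdesc : TransGen G.dir (x :: l)[0] (x :: l)[i + 1] :=
    List.pairwise_iff_getElem.1 hpw 0 (i + 1) (by simp) (by omega) (by omega)
  exact ⟨fun hcol => (hE.acyclic hcol.2 (.single (hE.dir hdir))).elim,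
    fun _ => hG.not_mem_paSib hdesc.to_reflTransGen⟩

end IsCPDAG

/-- `x` is an explicit cause of `y` iff `x` and `y` are d-connected given
`pa(x, G*) ∪ sib(x, G*)` in the DAGs of the equivalence class. -/
theorem stmt11 (G : PDGraph V) (hG : IsCPDAG G) (x y : V) (hxy : x ≠ y) :
    ExplicitCause G x y ↔
      ∀ E, InClass G E → DConn E (G.pa x ∪ G.sib x) x y := by
  obtain ⟨E₀, hE₀⟩ := hG.1
  exact ⟨fun h E hE => hG.dConn_of_explicitCause hE h,
    fun h => hG.explicitCause_of_dConn hE₀ hxy (h E₀ hE₀)⟩
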